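/- arXiv:1809.08736 — 2 statements merged into one kernel-verified Lean document; each statement's English description precedes it below -/
import Mathlib

section
/- Let u, v : ℝ × ℝ → ℝ be smooth (C^∞) functions of (t, x) and let a, b, c, ε, κ, λ, σ be real constants with b = 0 and ε = σ. If (u, v) solves the BBM-KdV system, then the vector with components C^t = 2·(u·v − ε·u_x·v_x) and C^x = c·u² + (2a·u + c)·v² − (λ·u_x² + κ·v_x²) + 2·u·(λ·u_xx + ε·v_tx) + 2·v·(ε·u_tx + κ·v_xx) satisfies the conservation law ∂_t C^t + ∂_x C^x = 0 at every point (t, x). -/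
open Real

noncomputable def pt (f : ℝ × ℝ → ℝ) : ℝ × ℝ → ℝ :=
  fun p => deriv (fun s => f (s, p.2)) p.1

noncomputable def px (f : ℝ × ℝ → ℝ) : ℝ × ℝ → ℝ :=
  fun p => deriv (fun s => f (p.1, s)) p.2

-- lines as smooth maps
lemma lineT_hasDerivAt (x : ℝ) (s : ℝ) : HasDerivAt (fun s : ℝ => (s, x)) ((1:ℝ), (0:ℝ)) s :=
  (hasDerivAt_id s).prodMk (hasDerivAt_const s x)

lemma lineX_hasDerivAt (t : ℝ) (s : ℝ) : HasDerivAt (fun s : ℝ => (t, s)) ((0:ℝ), (1:ℝ)) s :=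
  (hasDerivAt_const s t).prodMk (hasDerivAt_id s)

lemma hasDerivAt_pt {f : ℝ × ℝ → ℝ} (hf : ContDiff ℝ (⊤ : ℕ∞) f) (p : ℝ × ℝ) :
    HasDerivAt (fun s => f (s, p.2)) (pt f p) p.1 := by
  have h := ((hf.differentiable (by simp) p).hasFDerivAt).comp_hasDerivAt p.1
     (lineT_hasDerivAt p.2 p.1)
  have : pt f p = fderiv ℝ f p (1, 0) := h.deriv
  rw [this]; exact h

lemma hasDerivAt_px {f : ℝ × ℝ → ℝ} (hf : ContDiff ℝ (⊤ : ℕ∞) f) (p : ℝ × ℝ) :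
    HasDerivAt (fun s => f (p.1, s)) (px f p) p.2 := by
  have h := ((hf.differentiable (by simp) p).hasFDerivAt).comp_hasDerivAt p.2
     (lineX_hasDerivAt p.1 p.2)
  have : px f p = fderiv ℝ f p (0, 1) := h.deriv
  rw [this]; exact h

lemma pt_eq_fderiv {f : ℝ × ℝ → ℝ} (hf : ContDiff ℝ (⊤ : ℕ∞) f) :
    pt f = fun p => fderiv ℝ f p (1, 0) := by
  funext p
  exact (((hf.differentiable (by simp) p).hasFDerivAt).comp_hasDerivAt p.1
     (lineT_hasDerivAt p.2 p.1)).deriv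

lemma px_eq_fderiv {f : ℝ × ℝ → ℝ} (hf : ContDiff ℝ (⊤ : ℕ∞) f) :
    px f = fun p => fderiv ℝ f p (0, 1) := by
  funext p
  exact (((hf.differentiable (by simp) p).hasFDerivAt).comp_hasDerivAt p.2
     (lineX_hasDerivAt p.1 p.2)).deriv

lemma contDiff_fderiv_apply {f : ℝ × ℝ → ℝ} (hf : ContDiff ℝ (⊤ : ℕ∞) f) (w : ℝ × ℝ) :
    ContDiff ℝ (⊤ : ℕ∞) (fun p => fderiv ℝ f p w) :=
  (hf.fderiv_right (by simp)).clm_apply contDiff_const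

lemma contDiff_pt {f : ℝ × ℝ → ℝ} (hf : ContDiff ℝ (⊤ : ℕ∞) f) : ContDiff ℝ (⊤ : ℕ∞) (pt f) := by
  rw [pt_eq_fderiv hf]; exact contDiff_fderiv_apply hf _

lemma contDiff_px {f : ℝ × ℝ → ℝ} (hf : ContDiff ℝ (⊤ : ℕ∞) f) : ContDiff ℝ (⊤ : ℕ∞) (px f) := by
  rw [px_eq_fderiv hf]; exact contDiff_fderiv_apply hf _

lemma pt_px_comm {f : ℝ × ℝ → ℝ} (hf : ContDiff ℝ (⊤ : ℕ∞) f) (p : ℝ × ℝ) :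
    pt (px f) p = px (pt f) p := by
  rw [pt_eq_fderiv (contDiff_px hf), px_eq_fderiv (contDiff_pt hf),
      px_eq_fderiv hf, pt_eq_fderiv hf]
  have hsymm : IsSymmSndFDerivAt ℝ f p := hf.contDiffAt.isSymmSndFDerivAt (by
    rw [minSmoothness_of_isRCLikeNormedField]; exact WithTop.coe_le_coe.mpr le_top)
  have hdiff : DifferentiableAt ℝ (fderiv ℝ f) p :=
    ((hf.fderiv_right (m := (⊤ : ℕ∞)) (by simp)).differentiable (by simp)) p
  have h1 : fderiv ℝ (fun q => fderiv ℝ f q (0,1)) p (1,0)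
      = fderiv ℝ (fderiv ℝ f) p (1,0) (0,1) := by
    have := ((ContinuousLinearMap.apply ℝ ℝ ((0:ℝ),(1:ℝ))).hasFDerivAt.comp p
      hdiff.hasFDerivAt).fderiv
    rw [show (fun q => fderiv ℝ f q (0,1)) = (ContinuousLinearMap.apply ℝ ℝ ((0:ℝ),(1:ℝ))) ∘ (fderiv ℝ f) from rfl, this]
    rfl
  have h2 : fderiv ℝ (fun q => fderiv ℝ f q (1,0)) p (0,1)
      = fderiv ℝ (fderiv ℝ f) p (0,1) (1,0) := by
    have := ((ContinuousLinearMap.apply ℝ ℝ ((1:ℝ),(0:ℝ))).hasFDerivAt.comp p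
      hdiff.hasFDerivAt).fderiv
    rw [show (fun q => fderiv ℝ f q (1,0)) = (ContinuousLinearMap.apply ℝ ℝ ((1:ℝ),(0:ℝ))) ∘ (fderiv ℝ f) from rfl, this]
    rfl
  show fderiv ℝ (fun q => fderiv ℝ f q (0,1)) p (1,0) = fderiv ℝ (fun q => fderiv ℝ f q (1,0)) p (0,1)
  exact h1.trans ((hsymm _ _).trans h2.symm)

/-- The BBM-KdV system: F1 = 0 and F2 = 0 everywhere. -/
def BBMKdV (a b c ε κ lam σ : ℝ) (u v : ℝ × ℝ → ℝ) : Prop :=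
  (∀ p : ℝ × ℝ, pt u p + (a + b) * v p * px u p + (a * u p + c) * px v p
      + ε * px (px (pt u)) p + κ * px (px (px v)) p = 0) ∧
  (∀ p : ℝ × ℝ, pt v p + (b * u p + c) * px u p + (a + b) * v p * px v p
      + lam * px (px (px u)) p + σ * px (px (pt v)) p = 0)

theorem stmt_2 (u v : ℝ × ℝ → ℝ) (hu : ContDiff ℝ (⊤ : ℕ∞) u) (hv : ContDiff ℝ (⊤ : ℕ∞) v)
    (a b c ε κ lam σ : ℝ)
    (hb : b = 0) (hes : ε = σ)
    (hsol : BBMKdV a b c ε κ lam σ u v) :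
    ∀ p : ℝ × ℝ,
      pt (fun q => 2 * (u q * v q - ε * px u q * px v q)) p
      + px (fun q => c * u q ^ 2 + (2 * a * u q + c) * v q ^ 2 - (lam * (px u q) ^ 2 + κ * (px v q) ^ 2) + 2 * u q * (lam * px (px u) q + ε * px (pt v) q) + 2 * v q * (ε * px (pt u) q + κ * px (px v) q)) p = 0 := by
  intro p
  have dU := hasDerivAt_pt hu p
  have dV := hasDerivAt_pt hv p
  have dUx := hasDerivAt_pt (contDiff_px hu) p
  have dVx := hasDerivAt_pt (contDiff_px hv) p
  have e1 : pt (fun q => 2 * (u q * v q - ε * px u q * px v q)) p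
      = 2 * ((pt u p * v p + u p * pt v p)
        - ((ε * pt (px u) p) * px v p + (ε * px u p) * pt (px v) p)) :=
    HasDerivAt.deriv (((dU.mul dV).sub ((dUx.const_mul ε).mul dVx)).const_mul 2)
  have xU := hasDerivAt_px hu p
  have xV := hasDerivAt_px hv p
  have xUx := hasDerivAt_px (contDiff_px hu) p
  have xVx := hasDerivAt_px (contDiff_px hv) p
  have xUxx := hasDerivAt_px (contDiff_px (contDiff_px hu)) p
  have xVtx := hasDerivAt_px (contDiff_px (contDiff_pt hv)) p
  have xUtx := hasDerivAt_px (contDiff_px (contDiff_pt hu)) p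
  have xVxx := hasDerivAt_px (contDiff_px (contDiff_px hv)) p
  have e2 : px (fun q => c * u q ^ 2 + (2 * a * u q + c) * v q ^ 2
        - (lam * (px u q) ^ 2 + κ * (px v q) ^ 2)
        + 2 * u q * (lam * px (px u) q + ε * px (pt v) q)
        + 2 * v q * (ε * px (pt u) q + κ * px (px v) q)) p
      = (((c * ((2:ℕ) * u p ^ 1 * px u p)
          + (((2 * a) * px u p) * v p ^ 2 + ((2 * a) * u p + c) * ((2:ℕ) * v p ^ 1 * px v p)))
        - (lam * ((2:ℕ) * px u p ^ 1 * px (px u) p) + κ * ((2:ℕ) * px v p ^ 1 * px (px v) p)))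
        + ((2 * px u p) * (lam * px (px u) p + ε * px (pt v) p)
          + (2 * u p) * (lam * px (px (px u)) p + ε * px (px (pt v)) p)))
        + ((2 * px v p) * (ε * px (pt u) p + κ * px (px v) p)
          + (2 * v p) * (ε * px (px (pt u)) p + κ * px (px (px v)) p)) :=
    by
      have h := (((((xU.pow 2).const_mul c).add
          (((xU.const_mul (2 * a)).add_const c).mul (xV.pow 2))).sub
          (((xUx.pow 2).const_mul lam).add ((xVx.pow 2).const_mul κ))).add
          ((xU.const_mul 2).mul ((xUxx.const_mul lam).add (xVtx.const_mul ε)))).add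
          ((xV.const_mul 2).mul ((xUtx.const_mul ε).add (xVxx.const_mul κ)))
      exact h.deriv
  rw [e1, e2, pt_px_comm hu p, pt_px_comm hv p]
  have h1 := hsol.1 p
  have h2 := hsol.2 p
  subst hb hes
  linear_combination (2 * v p) * h1 + (2 * u p) * h2
end

section
/- Let u, v : ℝ × ℝ → ℝ be smooth (C^∞) functions of (t, x) and let a, b, c, ε, κ, λ, σ be real constants with b = 0 and ε = σ. Define ū(t,x) = a·v(t,x) and v̄(t,x) = a·u(t,x) + c. If (u, v) solves the BBM-KdV system, then (ū, v̄) solves the adjoint system at every point (t, x); in fact F1* evaluated at (ū, v̄) equals a·F2 and F2* evaluated at (ū, v̄) equals a·F1. -/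
open Real

/-- The adjoint of the BBM-KdV system along (u, v): F1* = 0 and F2* = 0 everywhere. -/
def AdjBBMKdV (a b c ε κ lam σ : ℝ) (u v ub vb : ℝ × ℝ → ℝ) : Prop :=
  (∀ p : ℝ × ℝ, pt ub p + (a + b) * v p * px ub p + (b * u p + c) * px vb p
      + b * ub p * px v p + ε * px (px (pt ub)) p + lam * px (px (px vb)) p = 0) ∧
  (∀ p : ℝ × ℝ, pt vb p + (a * u p + c) * px ub p + (a + b) * v p * px vb p
      - b * ub p * px u p + κ * px (px (px ub)) p + σ * px (px (pt vb)) p = 0)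

lemma pt_cm (a : ℝ) (f : ℝ × ℝ → ℝ) : pt (fun q => a * f q) = fun p => a * pt f p := by
  funext p; simp [pt, deriv_const_mul_field]

lemma px_cm (a : ℝ) (f : ℝ × ℝ → ℝ) : px (fun q => a * f q) = fun p => a * px f p := by
  funext p; simp [px, deriv_const_mul_field]

lemma pt_cmc (a c : ℝ) (f : ℝ × ℝ → ℝ) : pt (fun q => a * f q + c) = fun p => a * pt f p := by
  funext p; simp [pt, deriv_add_const, deriv_const_mul_field]

lemma px_cmc (a c : ℝ) (f : ℝ × ℝ → ℝ) : px (fun q => a * f q + c) = fun p => a * px f p := by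
  funext p; simp [px, deriv_add_const, deriv_const_mul_field]

theorem stmt_12 (u v : ℝ × ℝ → ℝ) (hu : ContDiff ℝ (⊤ : ℕ∞) u) (hv : ContDiff ℝ (⊤ : ℕ∞) v)
    (a b c ε κ lam σ : ℝ)
    (hb : b = 0) (hes : ε = σ)
    (hsol : BBMKdV a b c ε κ lam σ u v) :
    AdjBBMKdV a b c ε κ lam σ u v (fun p => a * v p) (fun p => a * u p + c) ∧
    ∀ p : ℝ × ℝ,
      (pt (fun q => a * v q) p + (a + b) * v p * px (fun q => a * v q) p
          + (b * u p + c) * px (fun q => a * u q + c) p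
          + b * (a * v p) * px v p
          + ε * px (px (pt (fun q => a * v q))) p
          + lam * px (px (px (fun q => a * u q + c))) p
        = a * (pt v p + (b * u p + c) * px u p + (a + b) * v p * px v p
          + lam * px (px (px u)) p + σ * px (px (pt v)) p)) ∧
      (pt (fun q => a * u q + c) p + (a * u p + c) * px (fun q => a * v q) p
          + (a + b) * v p * px (fun q => a * u q + c) p
          - b * (a * v p) * px u p
          + κ * px (px (px (fun q => a * v q))) p
          + σ * px (px (pt (fun q => a * u q + c))) p
        = a * (pt u p + (a + b) * v p * px u p + (a * u p + c) * px v p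
          + ε * px (px (pt u)) p + κ * px (px (px v)) p)) := by
  subst hb hes
  obtain ⟨h1, h2⟩ := hsol
  refine ⟨⟨fun p => ?_, fun p => ?_⟩,
    fun p => ⟨by simp only [pt_cm, px_cm, pt_cmc, px_cmc]; ring,
              by simp only [pt_cm, px_cm, pt_cmc, px_cmc]; ring⟩⟩
  · simp only [pt_cm, px_cm, pt_cmc, px_cmc]
    linear_combination a * h2 p
  · simp only [pt_cm, px_cm, pt_cmc, px_cmc]
    linear_combination a * h1 p
end
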